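/- Instrumentation soundness (Theorem 5.1, base case): if Φ is a sound safety condition for a statement s (Φ ⇒ wp(s, true)), then prepending 'assume ¬Φ' to s preserves failing executions: for all σ, σ', ⟨assume ¬Φ; s, σ⟩ ⇓_fail σ' ↔ ⟨s, σ⟩ ⇓_fail σ'. In particular ¬Φ is a necessary condition for s to fail. -/

import Mathlib

abbrev Var := String
abbrev State := Var → ℤ

inductive Outcome | fail | assumeViolation | ok
deriving DecidableEq

inductive Stmt
  | skip
  | assign (v : Var) (e : State → ℤ)
  | assertS (p : State → Prop)
  | assumeS (p : State → Prop)
  | seq (s₁ s₂ : Stmt)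
  | ite (s₁ s₂ : Stmt)

inductive Exec : Stmt → State → Outcome → State → Prop
  | skip {σ} : Exec .skip σ .ok σ
  | assign {σ v e} : Exec (.assign v e) σ .ok (Function.update σ v (e σ))
  | assertOk {σ p} : p σ → Exec (.assertS p) σ .ok σ
  | assertFail {σ p} : ¬ p σ → Exec (.assertS p) σ .fail σ
  | assumeOk {σ p} : p σ → Exec (.assumeS p) σ .ok σ
  | assumeViol {σ p} : ¬ p σ → Exec (.assumeS p) σ .assumeViolation σ
  | seqOk {s₁ s₂ σ σ₁ φ σ₂} : Exec s₁ σ .ok σ₁ → Exec s₂ σ₁ φ σ₂ → Exec (.seq s₁ s₂) σ φ σ₂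
  | seqAbort {s₁ s₂ σ φ σ₁} : Exec s₁ σ φ σ₁ → φ ≠ .ok → Exec (.seq s₁ s₂) σ φ σ₁
  | iteL {s₁ s₂ σ φ σ'} : Exec s₁ σ φ σ' → Exec (.ite s₁ s₂) σ φ σ'
  | iteR {s₁ s₂ σ φ σ'} : Exec s₂ σ φ σ' → Exec (.ite s₁ s₂) σ φ σ'

def EquiSafe (s s' : Stmt) : Prop :=
  ∀ σ σ', Exec s σ .fail σ' ↔ Exec s' σ .fail σ'

def Trimmed (s s' : Stmt) : Prop :=
  EquiSafe s s' ∧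
  (∀ σ σ', Exec s σ .ok σ' →
     Exec s' σ .ok σ' ∨ ∃ σ'', Exec s' σ .assumeViolation σ'') ∧
  (∀ σ σ', Exec s σ .assumeViolation σ' → ∃ σ'', Exec s' σ .assumeViolation σ'')

namespace Exec

theorem seq_assumeS_iff {p : State → Prop} {s : Stmt} {σ σ' : State} {φ : Outcome}
    (hφ : φ ≠ .assumeViolation) :
    Exec (.seq (.assumeS p) s) σ φ σ' ↔ p σ ∧ Exec s σ φ σ' := by
  refine ⟨fun h => ?_, fun ⟨hp, hs⟩ => seqOk (assumeOk hp) hs⟩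
  cases h with
  | seqOk hassume hs => cases hassume with | assumeOk hp => exact ⟨hp, hs⟩
  | seqAbort hassume hne =>
    cases hassume with
    | assumeOk _ => exact absurd rfl hne
    | assumeViol _ => exact absurd rfl hφ

end Exec

/-- Instrumentation soundness (base case): if Φ is a sound safety condition for
s, then 'assume ¬Φ; s' preserves failing executions exactly, and ¬Φ is a
necessary condition for s to fail. -/
theorem instrumentation_sound (s : Stmt) (Φ : State → Prop)
    (hsafe : ∀ σ, Φ σ → ∀ σ', ¬ Exec s σ .fail σ') :
    (∀ σ σ',
      Exec (.seq (.assumeS fun σ => ¬ Φ σ) s) σ .fail σ' ↔ Exec s σ .fail σ') ∧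
    (∀ σ σ', Exec s σ .fail σ' → ¬ Φ σ) := by
  have fail_not_safe : ∀ σ σ', Exec s σ .fail σ' → ¬ Φ σ := fun σ σ' h hΦ => hsafe σ hΦ σ' h
  refine ⟨fun σ σ' => ?_, fail_not_safe⟩
  rw [Exec.seq_assumeS_iff (by decide)]
  exact and_iff_right_of_imp (fail_not_safe σ σ')
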